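/- arXiv:2012.11877 — 3 statements merged into one kernel-verified Lean document; each statement's English description precedes it below -/
import Mathlib

section
/- For natural numbers k ≤ n - m and m ≤ n with n ≥ 1, the ratio of binomial coefficients C(n-m, k) / C(n, k) is at most exp(-k·m/n). -/
/-!
Writing `C(n-m, k) / C(n, k) = ∏_{i<k} (n-m-i)/(n-i)`, each factor is at most `(n-m)/n = 1 - m/n`,
and `1 - m/n ≤ exp (-m/n)`.
-/

namespace Nat

theorem sub_mul_le_mul_sub {a b : ℕ} (h : a ≤ b) (k : ℕ) : (a - k) * b ≤ a * (b - k) := by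
  rw [Nat.sub_mul, Nat.mul_sub, Nat.mul_comm k b]
  exact Nat.sub_le_sub_left (Nat.mul_le_mul_right k h) _

theorem descFactorial_mul_pow_le_pow_mul_descFactorial {a b : ℕ} (h : a ≤ b) :
    ∀ k : ℕ, a.descFactorial k * b ^ k ≤ a ^ k * b.descFactorial k
  | 0 => by simp
  | k + 1 => by
    calc a.descFactorial (k + 1) * b ^ (k + 1)
        = ((a - k) * b) * (a.descFactorial k * b ^ k) := by
          rw [descFactorial_succ, pow_succ]; ring
      _ ≤ (a * (b - k)) * (a ^ k * b.descFactorial k) :=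
          Nat.mul_le_mul (sub_mul_le_mul_sub h k)
            (descFactorial_mul_pow_le_pow_mul_descFactorial h k)
      _ = a ^ (k + 1) * b.descFactorial (k + 1) := by
          rw [descFactorial_succ, pow_succ]; ring

theorem choose_mul_pow_le_pow_mul_choose {a b : ℕ} (h : a ≤ b) (k : ℕ) :
    a.choose k * b ^ k ≤ a ^ k * b.choose k := by
  have := descFactorial_mul_pow_le_pow_mul_descFactorial h k
  rw [descFactorial_eq_factorial_mul_choose, descFactorial_eq_factorial_mul_choose] at this
  refine Nat.le_of_mul_le_mul_left ?_ k.factorial_pos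
  linarith

theorem cast_choose_div_cast_choose_le {a b : ℕ} (h : a ≤ b) (k : ℕ) :
    (a.choose k : ℝ) / b.choose k ≤ ((a : ℝ) / b) ^ k := by
  rcases (b.choose k).eq_zero_or_pos with hc | hc
  · rw [hc, Nat.cast_zero, div_zero]
    positivity
  have hpow : 0 < b ^ k := hc.trans_le (choose_le_pow b k)
  rw [div_pow, div_le_div_iff₀ (by exact_mod_cast hc) (by exact_mod_cast hpow)]
  exact_mod_cast choose_mul_pow_le_pow_mul_choose h k

end Nat

theorem cast_sub_div_le_exp_neg_div (n m : ℕ) : ((n - m : ℕ) : ℝ) / n ≤ Real.exp (-(m / n)) := by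
  rcases le_or_gt m n with h | h
  · calc ((n - m : ℕ) : ℝ) / n = n / n - m / n := by rw [Nat.cast_sub h, sub_div]
      _ ≤ 1 - m / n := by gcongr; exact div_self_le_one _
      _ ≤ Real.exp (-(m / n)) := by linarith [Real.add_one_le_exp (-(m / n : ℝ))]
  · rw [Nat.sub_eq_zero_of_le h.le, Nat.cast_zero, zero_div]
    positivity

theorem choose_ratio_le_exp_general (n m k : ℕ) :
    ((n - m).choose k : ℝ) / (n.choose k : ℝ) ≤
      Real.exp (-((k : ℝ) * (m : ℝ) / (n : ℝ))) :=
  calc ((n - m).choose k : ℝ) / n.choose k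
      ≤ (((n - m : ℕ) : ℝ) / n) ^ k := Nat.cast_choose_div_cast_choose_le (n.sub_le m) k
    _ ≤ Real.exp (-(m / n)) ^ k := by gcongr; exact cast_sub_div_le_exp_neg_div n m
    _ = Real.exp (-(k * m / n)) := by rw [← Real.exp_nat_mul]; ring_nf

/-- For `k ≤ n - m`, `m ≤ n`, `n ≥ 1`, the ratio `C(n-m,k) / C(n,k)` is at most
`exp (-(k m / n))`. -/
theorem choose_ratio_le_exp (n m k : ℕ) (hn : 1 ≤ n) (hm : m ≤ n) (hk : k ≤ n - m) :
    ((n - m).choose k : ℝ) / (n.choose k : ℝ) ≤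
      Real.exp (-((k : ℝ) * (m : ℝ) / (n : ℝ))) :=
  choose_ratio_le_exp_general n m k
end

section
/- Let X be Binomial(d, q) and let f : ℕ → ℝ be given by f(k) = exp(-k·y) for a constant y > 0. Then E[f(X)] ≤ exp(-d·q/8) + exp(-d·q·y/2). -/
/-!
Bound `exp (-k y)` pointwise by `2 ^ (d q / 2 - k) + exp (-d q y / 2)`: the first term dominates
when `k ≤ d q / 2` and the second when `k > d q / 2`. Averaging against the binomial weights, the
first term has expectation `2 ^ (d q / 2) (1 - q / 2) ^ d ≤ exp ((log 2 - 1) d q / 2)`, and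
`log 2 - 1 ≤ -1 / 4` gives the Chernoff bound `exp (-d q / 8)`.
-/

open Real Finset

noncomputable section

def binomialWeight (d : ℕ) (q : ℝ) (k : ℕ) : ℝ :=
  (d.choose k : ℝ) * q ^ k * (1 - q) ^ (d - k)

namespace binomialWeight

lemma nonneg {q : ℝ} (hq0 : 0 ≤ q) (hq1 : q ≤ 1) (d k : ℕ) : 0 ≤ binomialWeight d q k := by
  have : 0 ≤ 1 - q := by linarith
  unfold binomialWeight
  positivity

lemma sum_mul_pow (d : ℕ) (q t : ℝ) :
    ∑ k ∈ range (d + 1), binomialWeight d q k * t ^ k = (q * t + (1 - q)) ^ d := by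
  rw [add_pow]
  refine sum_congr rfl fun k _ => ?_
  unfold binomialWeight
  ring

lemma sum_eq_one (d : ℕ) (q : ℝ) : ∑ k ∈ range (d + 1), binomialWeight d q k = 1 := by
  simpa using sum_mul_pow d q 1

lemma sum_mul_exp_mul_sub (d : ℕ) (q s a : ℝ) :
    ∑ k ∈ range (d + 1), binomialWeight d q k * exp (s * (a - k))
      = exp (s * a) * (q * exp (-s) + (1 - q)) ^ d := by
  rw [← sum_mul_pow, mul_sum]
  refine sum_congr rfl fun k _ => ?_
  rw [← exp_nat_mul, mul_left_comm, ← exp_add]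
  ring_nf

lemma sum_mul_exp_log_two_le (d : ℕ) {q : ℝ} (hq0 : 0 ≤ q) (hq1 : q ≤ 1) :
    ∑ k ∈ range (d + 1), binomialWeight d q k * exp (log 2 * (d * q / 2 - k))
      ≤ exp (-(d * q / 8)) := by
  have hdq : 0 ≤ (d : ℝ) * q := by positivity
  have hlog2 : log 2 ≤ 3 / 4 := log_two_lt_d9.le.trans (by norm_num)
  have hbase : 0 ≤ 1 - q / 2 := by linarith
  calc ∑ k ∈ range (d + 1), binomialWeight d q k * exp (log 2 * (d * q / 2 - k))
      = exp (log 2 * (d * q / 2)) * (1 - q / 2) ^ d := by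
        rw [sum_mul_exp_mul_sub, exp_neg, exp_log two_pos]
        ring_nf
    _ ≤ exp (log 2 * (d * q / 2)) * exp (-(q / 2)) ^ d := by
        gcongr
        linarith [add_one_le_exp (-(q / 2))]
    _ = exp (log 2 * (d * q / 2) - d * q / 2) := by
        rw [← exp_nat_mul, ← exp_add]
        ring_nf
    _ ≤ exp (-(d * q / 8)) := exp_le_exp.mpr (by nlinarith)

end binomialWeight

lemma exp_neg_mul_le_exp_mul_sub_add {x y s : ℝ} (a : ℝ) (hx : 0 ≤ x) (hy : 0 ≤ y) (hs : 0 ≤ s) :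
    exp (-(x * y)) ≤ exp (s * (a - x)) + exp (-(a * y)) := by
  rcases le_or_gt x a with hxa | hax
  · have h1 : exp (-(x * y)) ≤ 1 := exp_le_one_iff.mpr (by nlinarith)
    have h2 : 1 ≤ exp (s * (a - x)) := one_le_exp (by nlinarith)
    linarith [exp_pos (-(a * y))]
  · have : exp (-(x * y)) ≤ exp (-(a * y)) := exp_le_exp.mpr (by nlinarith)
    linarith [exp_pos (s * (a - x))]

end

/-- For `X ~ Binomial(d, q)` and `f k = exp (-(k y))` with `y > 0`,
`E[f(X)] ≤ exp (-(d q / 8)) + exp (-(d q y / 2))`. -/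
theorem binomial_expectation_exp_le (d : ℕ) (q y : ℝ)
    (hq0 : 0 < q) (hq1 : q ≤ 1) (hy : 0 < y) :
    (∑ k ∈ Finset.range (d + 1),
        (d.choose k : ℝ) * q ^ k * (1 - q) ^ (d - k) * Real.exp (-((k : ℝ) * y)))
      ≤ Real.exp (-((d : ℝ) * q / 8)) + Real.exp (-((d : ℝ) * q * y / 2)) := by
  set a : ℝ := d * q / 2
  calc ∑ k ∈ range (d + 1), binomialWeight d q k * exp (-((k : ℝ) * y))
      ≤ ∑ k ∈ range (d + 1),
          binomialWeight d q k * (exp (log 2 * (a - k)) + exp (-(a * y))) := by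
        gcongr with k
        · exact binomialWeight.nonneg hq0.le hq1 d k
        · exact exp_neg_mul_le_exp_mul_sub_add a k.cast_nonneg hy.le (log_nonneg one_le_two)
    _ = ∑ k ∈ range (d + 1), binomialWeight d q k * exp (log 2 * (a - k)) + exp (-(a * y)) := by
        rw [sum_congr rfl fun k _ => mul_add _ _ _, sum_add_distrib, ← sum_mul,
          binomialWeight.sum_eq_one, one_mul]
    _ ≤ exp (-(d * q / 8)) + exp (-(d * q * y / 2)) := by
        rw [show a * y = d * q * y / 2 by ring]
        gcongr
        exact binomialWeight.sum_mul_exp_log_two_le d hq0.le hq1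
end

section
/- Let n be a positive integer, θ₀ < θ₁ ≤ n natural numbers, and ε ∈ (0,1). Let X₀, X₁ be probability distributions on {0,...,n} supported on {0,...,θ₀} and {θ₁,...,n} respectively, and M : {0,...,n} → distributions on {0,...,n} a randomized mechanism with induced output distributions Z_i(a) = Σ_b X_i(b)·Pr[M(b) = a]. If TVD(Z₀, Z₁) ≤ 1 - ε, then there exists x ∈ {0,...,n} in the support of X₀ or of X₁ such that Pr[|M(x) - x| ≥ (θ₁ - θ₀)/2] ≥ ε/2. -/
/-!
Threshold the output at the midpoint `(θ₀ + θ₁) / 2`. As a test between `Z₀` and `Z₁` this has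
advantage at most `TVD(Z₀, Z₁) ≤ 1 - ε`, so either `Z₀` puts mass `≥ ε/2` above the midpoint or
`Z₁` puts mass `≥ ε/2` below it. Each `Zᵢ` is an `Xᵢ`-average of the rows `M x`, so some `x` in the
support of `Xᵢ` does at least as badly; since `x ≤ θ₀` (resp. `θ₁ ≤ x`), every output on the wrong
side of the midpoint is at distance `≥ (θ₁ - θ₀) / 2` from `x`.
-/

open Finset

section

variable {α β : Type*} [Fintype β]

theorem exists_ne_zero_le_of_le_sum_mul (X p : β → ℝ) (hX : ∀ b, 0 ≤ X b)
    (h1 : ∑ b, X b = 1) {c : ℝ} (h : c ≤ ∑ b, X b * p b) : ∃ b, X b ≠ 0 ∧ c ≤ p b := by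
  by_contra! H
  obtain ⟨b₀, hb₀⟩ : ∃ b, X b ≠ 0 := by
    by_contra! h0
    simp [h0] at h1
  have hlt : ∑ b, X b * p b < ∑ b, X b * c := by
    refine sum_lt_sum (fun b _ => ?_) ⟨b₀, mem_univ _, ?_⟩
    · rcases eq_or_ne (X b) 0 with h0 | h0
      · simp [h0]
      · exact mul_le_mul_of_nonneg_left (H b h0).le (hX b)
    · exact mul_lt_mul_of_pos_left (H b₀ hb₀) ((hX b₀).lt_of_ne' hb₀)
  rw [← sum_mul, h1, one_mul] at hlt
  linarith

theorem sum_sum_mul_eq_sum_mul_sum (X : β → ℝ) (M : β → α → ℝ) (s : Finset α) :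
    ∑ a ∈ s, ∑ b, X b * M b a = ∑ b, X b * ∑ a ∈ s, M b a := by
  rw [sum_comm]
  simp_rw [mul_sum]

theorem sum_sum_mul_eq_one [Fintype α] (X : β → ℝ) (M : β → α → ℝ) (hX : ∑ b, X b = 1)
    (hM : ∀ b, ∑ a, M b a = 1) : ∑ a, ∑ b, X b * M b a = 1 := by
  simp [sum_sum_mul_eq_sum_mul_sum, hM, hX]

theorem exists_ne_zero_le_sum_of_le_sum_sum_mul (X : β → ℝ) (M : β → α → ℝ)
    (hX : ∀ b, 0 ≤ X b) (h1 : ∑ b, X b = 1) (s : Finset α) {c : ℝ}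
    (h : c ≤ ∑ a ∈ s, ∑ b, X b * M b a) : ∃ x, X x ≠ 0 ∧ c ≤ ∑ a ∈ s, M x a :=
  exists_ne_zero_le_of_le_sum_mul X _ hX h1 (sum_sum_mul_eq_sum_mul_sum X M s ▸ h)

theorem two_mul_sub_le_sum_abs_sub [Fintype α] [DecidableEq α] {Z₀ Z₁ : α → ℝ}
    (h : ∑ a, Z₀ a = ∑ a, Z₁ a) (s : Finset α) :
    2 * (∑ a ∈ s, Z₁ a - ∑ a ∈ s, Z₀ a) ≤ ∑ a, |Z₀ a - Z₁ a| := by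
  have hs : ∑ a ∈ s, (Z₁ a - Z₀ a) ≤ ∑ a ∈ s, |Z₀ a - Z₁ a| :=
    sum_le_sum fun a _ => abs_sub_comm (Z₀ a) (Z₁ a) ▸ le_abs_self _
  have hsc : ∑ a ∈ sᶜ, (Z₀ a - Z₁ a) ≤ ∑ a ∈ sᶜ, |Z₀ a - Z₁ a| :=
    sum_le_sum fun a _ => le_abs_self _
  rw [← sum_add_sum_compl s Z₀, ← sum_add_sum_compl s Z₁] at h
  rw [sum_sub_distrib] at hs hsc
  rw [← sum_add_sum_compl s]
  linarith

theorem le_sum_add_sum_compl_of_half_sum_abs_sub_le [Fintype α] [DecidableEq α]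
    {Z₀ Z₁ : α → ℝ} (h₀ : ∑ a, Z₀ a = 1) (h₁ : ∑ a, Z₁ a = 1) {δ : ℝ}
    (h : 1 / 2 * ∑ a, |Z₀ a - Z₁ a| ≤ 1 - δ) (s : Finset α) :
    δ ≤ ∑ a ∈ s, Z₀ a + ∑ a ∈ sᶜ, Z₁ a := by
  have := two_mul_sub_le_sum_abs_sub (h₀.trans h₁.symm) s
  have := sum_add_sum_compl s Z₁
  linarith

end

open Classical in
theorem mechanism_large_noise_of_indistinguishable_general
    (n θ₀ θ₁ : ℕ) (ε : ℝ)
    (X₀ X₁ : Fin (n + 1) → ℝ) (M : Fin (n + 1) → Fin (n + 1) → ℝ)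
    (hX₀0 : ∀ b, 0 ≤ X₀ b) (hX₁0 : ∀ b, 0 ≤ X₁ b)
    (hX₀1 : ∑ b, X₀ b = 1) (hX₁1 : ∑ b, X₁ b = 1)
    (hM0 : ∀ b a, 0 ≤ M b a) (hM1 : ∀ b, ∑ a, M b a = 1)
    (hsupp₀ : ∀ b, X₀ b ≠ 0 → (b : ℕ) ≤ θ₀)
    (hsupp₁ : ∀ b, X₁ b ≠ 0 → θ₁ ≤ (b : ℕ))
    (hTVD : (1 / 2) * ∑ a, |(∑ b, X₀ b * M b a) - ∑ b, X₁ b * M b a| ≤ 1 - ε) :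
    ∃ x : Fin (n + 1), (X₀ x ≠ 0 ∨ X₁ x ≠ 0) ∧
      ε / 2 ≤ ∑ a ∈ Finset.univ.filter
        (fun a : Fin (n + 1) => ((θ₁ : ℝ) - (θ₀ : ℝ)) / 2 ≤ |(a : ℝ) - (x : ℝ)|),
        M x a := by
  set A := univ.filter fun a : Fin (n + 1) => ((θ₀ : ℝ) + θ₁) / 2 ≤ a
  have hsplit := le_sum_add_sum_compl_of_half_sum_abs_sub_le
    (sum_sum_mul_eq_one X₀ M hX₀1 hM1) (sum_sum_mul_eq_one X₁ M hX₁1 hM1) hTVD A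
  have hcase : ε / 2 ≤ ∑ a ∈ A, ∑ b, X₀ b * M b a ∨ ε / 2 ≤ ∑ a ∈ Aᶜ, ∑ b, X₁ b * M b a := by
    by_contra! h
    linarith [h.1, h.2]
  rcases hcase with h | h
  · obtain ⟨x, hx, hxA⟩ := exists_ne_zero_le_sum_of_le_sum_sum_mul X₀ M hX₀0 hX₀1 A h
    have hxθ : (x : ℝ) ≤ θ₀ := by exact_mod_cast hsupp₀ x hx
    refine ⟨x, .inl hx, hxA.trans (sum_le_sum_of_subset_of_nonneg ?_ fun a _ _ => hM0 x a)⟩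
    intro a ha
    simp only [A, mem_filter, mem_univ, true_and] at ha ⊢
    exact le_abs.2 (.inl (by linarith))
  · obtain ⟨x, hx, hxA⟩ := exists_ne_zero_le_sum_of_le_sum_sum_mul X₁ M hX₁0 hX₁1 Aᶜ h
    have hxθ : (θ₁ : ℝ) ≤ x := by exact_mod_cast hsupp₁ x hx
    refine ⟨x, .inr hx, hxA.trans (sum_le_sum_of_subset_of_nonneg ?_ fun a _ _ => hM0 x a)⟩
    intro a ha
    simp only [A, mem_compl, mem_filter, mem_univ, true_and, not_le] at ha ⊢
    exact le_abs.2 (.inr (by linarith))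

open Classical in
/-- If two priors `X₀, X₁` on `{0,…,n}` are supported on `{0,…,θ₀}` and `{θ₁,…,n}`
respectively, and a randomized mechanism `M` has output distributions
`Zᵢ(a) = ∑ b, Xᵢ(b) Pr[M(b) = a]` with `TVD(Z₀, Z₁) ≤ 1 - ε`, then some input `x`
in the support of `X₀` or `X₁` receives noise of magnitude `≥ (θ₁ - θ₀)/2` with
probability at least `ε/2`. -/
theorem mechanism_large_noise_of_indistinguishable
    (n θ₀ θ₁ : ℕ) (hn : 0 < n) (hθ : θ₀ < θ₁) (hθ₁ : θ₁ ≤ n)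
    (ε : ℝ) (hε0 : 0 < ε) (hε1 : ε < 1)
    (X₀ X₁ : Fin (n + 1) → ℝ) (M : Fin (n + 1) → Fin (n + 1) → ℝ)
    (hX₀0 : ∀ b, 0 ≤ X₀ b) (hX₁0 : ∀ b, 0 ≤ X₁ b)
    (hX₀1 : ∑ b, X₀ b = 1) (hX₁1 : ∑ b, X₁ b = 1)
    (hM0 : ∀ b a, 0 ≤ M b a) (hM1 : ∀ b, ∑ a, M b a = 1)
    (hsupp₀ : ∀ b, X₀ b ≠ 0 → (b : ℕ) ≤ θ₀)
    (hsupp₁ : ∀ b, X₁ b ≠ 0 → θ₁ ≤ (b : ℕ))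
    (hTVD : (1 / 2) * ∑ a, |(∑ b, X₀ b * M b a) - ∑ b, X₁ b * M b a| ≤ 1 - ε) :
    ∃ x : Fin (n + 1), (X₀ x ≠ 0 ∨ X₁ x ≠ 0) ∧
      ε / 2 ≤ ∑ a ∈ Finset.univ.filter
        (fun a : Fin (n + 1) => ((θ₁ : ℝ) - (θ₀ : ℝ)) / 2 ≤ |(a : ℝ) - (x : ℝ)|),
        M x a :=
  mechanism_large_noise_of_indistinguishable_general n θ₀ θ₁ ε X₀ X₁ M hX₀0 hX₁0 hX₀1 hX₁1 hM0 hM1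
    hsupp₀ hsupp₁ hTVD
end
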